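/- Every brace of order six or more is 3-connected. -/
import Mathlib


namespace MinimalBraces

open SimpleGraph

/-- The degree of a vertex, via the cardinality of its neighbor set. -/
noncomputable def mdeg {V : Type*} (G : SimpleGraph V) (v : V) : ℕ :=
  (G.neighborSet v).ncard

/-- `G` has a perfect matching. -/
def HasPerfectMatching {V : Type*} (G : SimpleGraph V) : Prop :=
  ∃ M : G.Subgraph, M.IsPerfectMatching

/-- A connected graph with at least one edge is matching covered if every edge
lies in some perfect matching. -/
def IsMatchingCovered {V : Type*} (G : SimpleGraph V) : Prop :=
  G.Connected ∧ G.edgeSet.Nonempty ∧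
    ∀ e ∈ G.edgeSet, ∃ M : G.Subgraph, M.IsPerfectMatching ∧ e ∈ M.edgeSet

/-- `A`, `B` are the color classes of a bipartition of `G`. -/
def IsBipartition {V : Type*} (G : SimpleGraph V) (A B : Set V) : Prop :=
  A ∪ B = Set.univ ∧ A ∩ B = ∅ ∧
    ∀ u v : V, G.Adj u v → (u ∈ A ∧ v ∈ B) ∨ (u ∈ B ∧ v ∈ A)

/-- `G` is bipartite (admits a bipartition into two color classes). -/
def IsBipartite' {V : Type*} (G : SimpleGraph V) : Prop :=
  ∃ A B : Set V, IsBipartition G A B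

/-- The cut `∂(X)`: the set of edges of `G` with exactly one end in `X`. -/
def cutEdges {V : Type*} (G : SimpleGraph V) (X : Set V) : Set (Sym2 V) :=
  {e | e ∈ G.edgeSet ∧ ∃ u v : V, e = s(u, v) ∧ u ∈ X ∧ v ∉ X}

/-- The cut `∂(X)` is tight: every perfect matching has exactly one edge in it. -/
def IsTightCut {V : Type*} (G : SimpleGraph V) (X : Set V) : Prop :=
  ∀ M : G.Subgraph, M.IsPerfectMatching → (M.edgeSet ∩ cutEdges G X).ncard = 1

/-- A shore is trivial if it or its complement is a singleton. -/
def IsTrivialShore {V : Type*} (X : Set V) : Prop :=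
  (∃ v, X = ({v} : Set V)) ∨ (∃ v, Xᶜ = ({v} : Set V))

/-- A brace: a bipartite matching covered graph free of nontrivial tight cuts. -/
def IsBrace {V : Type*} (G : SimpleGraph V) : Prop :=
  IsBipartite' G ∧ IsMatchingCovered G ∧ ∀ X : Set V, IsTightCut G X → IsTrivialShore X

/-- A minimal brace: deleting any edge results in a graph that is not a brace. -/
def IsMinimalBrace {V : Type*} (G : SimpleGraph V) : Prop :=
  IsBrace G ∧ ∀ e ∈ G.edgeSet, ¬ IsBrace (G.deleteEdges {e})

/-- The neighborhood of a set of vertices. -/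
def setNbhd {V : Type*} (G : SimpleGraph V) (Z : Set V) : Set V :=
  {v | ∃ z ∈ Z, G.Adj z v}

/-- An edge of a (simple) brace is superfluous if deleting it leaves a brace. -/
def IsSuperfluous {V : Type*} (G : SimpleGraph V) (e : Sym2 V) : Prop :=
  e ∈ G.edgeSet ∧ IsBrace (G.deleteEdges {e})

/-- A set of edges of `G` forming a matching. -/
def IsMatchingSet {V : Type*} (G : SimpleGraph V) (M : Set (Sym2 V)) : Prop :=
  M ⊆ G.edgeSet ∧ ∀ e₁ ∈ M, ∀ e₂ ∈ M, e₁ ≠ e₂ → ∀ v : V, ¬ (v ∈ e₁ ∧ v ∈ e₂)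

/-- `G` is 2-extendable: it has a matching of size two, and every matching of
size two extends to a perfect matching. -/
def IsTwoExtendable {V : Type*} (G : SimpleGraph V) : Prop :=
  (∃ M : Set (Sym2 V), IsMatchingSet G M ∧ M.ncard = 2) ∧
  ∀ M : Set (Sym2 V), IsMatchingSet G M → M.ncard = 2 →
    ∃ N : G.Subgraph, N.IsPerfectMatching ∧ M ⊆ N.edgeSet

/-- `G` is 3-connected: more than three vertices, and removing any at most two
vertices leaves a connected graph. -/
def IsThreeConnected {V : Type*} [Fintype V] (G : SimpleGraph V) : Prop :=
  4 ≤ Fintype.card V ∧ ∀ S : Set V, S.ncard ≤ 2 → (G.induce Sᶜ).Connected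

/-! ### Retracts (bicontraction of all degree-two vertices) -/

/-- `f : V → W` realizes `H` as the retract of `G`: the fibers of `f` are exactly
the closed neighborhoods of the degree-two vertices of `G` (and singletons
otherwise), and adjacency in `H` is induced by `G`. -/
def IsRetractMap {V W : Type*} (G : SimpleGraph V) (H : SimpleGraph W) (f : V → W) : Prop :=
  Function.Surjective f ∧
  (∀ u v : V, f u = f v ↔ (u = v ∨ ∃ v₀ : V, mdeg G v₀ = 2 ∧
      u ∈ insert v₀ (G.neighborSet v₀) ∧ v ∈ insert v₀ (G.neighborSet v₀))) ∧
  (∀ x y : W, H.Adj x y ↔ (x ≠ y ∧ ∃ u v : V, G.Adj u v ∧ f u = x ∧ f v = y))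

/-- The retract obtained via `f` is a simple graph, i.e. no two distinct edges of `G`
become parallel after the bicontractions. -/
def RetractMapSimple {V W : Type*} (G : SimpleGraph V) (f : V → W) : Prop :=
  ∀ e₁ ∈ G.edgeSet, ∀ e₂ ∈ G.edgeSet,
    Sym2.map f e₁ = Sym2.map f e₂ → ¬ (Sym2.map f e₁).IsDiag → e₁ = e₂

/-- An edge `e` of a brace `G` is thin if the retract of `G − e` is also a brace. -/
def IsThinEdge {V : Type*} (G : SimpleGraph V) (e : Sym2 V) : Prop :=
  e ∈ G.edgeSet ∧ ∃ (sH : Set V) (H : SimpleGraph sH) (f : V → sH),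
    IsRetractMap (G.deleteEdges {e}) H f ∧ IsBrace H

/-- `e` is a strictly thin edge of `G`, with retract `H` realized by the map `f`:
the retract of `G − e` is a brace and is simple. -/
def IsStrictlyThinVia {V W : Type*} (G : SimpleGraph V) (e : Sym2 V)
    (H : SimpleGraph W) (f : V → W) : Prop :=
  e ∈ G.edgeSet ∧ IsRetractMap (G.deleteEdges {e}) H f ∧ IsBrace H ∧
    RetractMapSimple (G.deleteEdges {e}) f

/-- `e` is a strictly thin edge of the simple brace `G`. -/
def IsStrictlyThinEdge {V : Type*} (G : SimpleGraph V) (e : Sym2 V) : Prop :=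
  ∃ (sH : Set V) (H : SimpleGraph sH) (f : V → sH), IsStrictlyThinVia G e H f

/-- The index of a (strictly thin) edge `e`, computed from `G' = G − e`:
the number of vertices of degree two in `G'`. -/
noncomputable def thinIndex {V : Type*} (G' : SimpleGraph V) : ℕ :=
  {v : V | mdeg G' v = 2}.ncard

/-- An inner vertex of `G' = G − e`: a vertex of degree two. -/
def IsInnerVertex {V : Type*} (G' : SimpleGraph V) (v : V) : Prop := mdeg G' v = 2

/-- An outer vertex of `G' = G − e`: a neighbor of an inner vertex. -/
def IsOuterVertex {V : Type*} (G' : SimpleGraph V) (v : V) : Prop :=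
  ∃ u : V, IsInnerVertex G' u ∧ G'.Adj u v

/-- `(e, F)` is a minimality-preserving pair of the minimal brace `G`, where the
retract `H` of `G − e` is realized by `f`: the edge `e` is strictly thin and
`H − F` is a minimal brace. -/
def IsMPPVia {V W : Type*} (G : SimpleGraph V) (H : SimpleGraph W) (f : V → W)
    (e : Sym2 V) (F : Set (Sym2 W)) : Prop :=
  IsMinimalBrace G ∧ IsStrictlyThinVia G e H f ∧ F ⊆ H.edgeSet ∧
    IsMinimalBrace (H.deleteEdges F)

/-! ### Stable extensions -/

/-- The `S`-extension of `J` with respect to `S = {a₁, a₂, b₁, b₂}`: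
two new vertices `a₀ = inr 0` and `b₀ = inr 1` and five new edges
`a₀b₁, a₀b₂, b₀a₁, b₀a₂, a₀b₀`. -/
def stableExtGraph {U : Type*} (J : SimpleGraph U) (a₁ a₂ b₁ b₂ : U) :
    SimpleGraph (U ⊕ Fin 2) :=
  SimpleGraph.fromRel (fun x y =>
    match x, y with
    | Sum.inl u, Sum.inl v => J.Adj u v
    | Sum.inl u, Sum.inr k => (k = 0 ∧ (u = b₁ ∨ u = b₂)) ∨ (k = 1 ∧ (u = a₁ ∨ u = a₂))
    | Sum.inr j, Sum.inr k => j ≠ k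
    | Sum.inr _, Sum.inl _ => False)

/-- `G` is (isomorphic to) a stable-extension of the connected bipartite graph `J`,
with respect to some stable set meeting each color class in exactly two vertices. -/
def IsStableExtensionOf {V U : Type*} (G : SimpleGraph V) (J : SimpleGraph U) : Prop :=
  ∃ (A B : Set U) (a₁ a₂ b₁ b₂ : U), J.Connected ∧ IsBipartition J A B ∧
    a₁ ∈ A ∧ a₂ ∈ A ∧ b₁ ∈ B ∧ b₂ ∈ B ∧ a₁ ≠ a₂ ∧ b₁ ≠ b₂ ∧
    ¬ J.Adj a₁ b₁ ∧ ¬ J.Adj a₁ b₂ ∧ ¬ J.Adj a₂ b₁ ∧ ¬ J.Adj a₂ b₂ ∧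
    Nonempty (G ≃g stableExtGraph J a₁ a₂ b₁ b₂)

/-! ### Concrete families of graphs -/

/-- The complete graph on two vertices. -/
def K2graph : SimpleGraph (Fin 2) := ⊤

/-- The cycle graph `Cₙ` on `ZMod n`. -/
def cycleGraph (n : ℕ) : SimpleGraph (ZMod n) :=
  SimpleGraph.fromRel (fun x y => x - y = 1)

/-- The Möbius ladder `M_{2m}`: the cycle `C_{2m}` plus the long chords. -/
def mobiusLadder (m : ℕ) : SimpleGraph (ZMod (2 * m)) :=
  SimpleGraph.fromRel (fun x y => x - y = 1 ∨ x - y = (m : ZMod (2 * m)))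

/-- The prism (ladder) over the cycle `Cₘ`. -/
def prismGraph (m : ℕ) : SimpleGraph (ZMod m × Bool) :=
  SimpleGraph.fromRel (fun p q => (p.2 = q.2 ∧ p.1 - q.1 = 1) ∨ (p.1 = q.1 ∧ p.2 ≠ q.2))

/-- The biwheel `B_{2m+2}`: the cycle `C_{2m}` plus two nonadjacent hubs, one joined to
all even rim vertices, the other to all odd rim vertices. `B_{2n} = biwheel (n-1)`. -/
def biwheel (m : ℕ) : SimpleGraph (ZMod (2 * m) ⊕ Fin 2) :=
  SimpleGraph.fromRel (fun x y =>
    match x, y with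
    | Sum.inl a, Sum.inl b => a - b = 1
    | Sum.inl a, Sum.inr k => (k = 0 ∧ Even a) ∨ (k = 1 ∧ ¬ Even a)
    | Sum.inr _, _ => False)

/-- The complete bipartite graph `K_{3,3}`. -/
def K33graph : SimpleGraph (Fin 3 ⊕ Fin 3) := completeBipartiteGraph (Fin 3) (Fin 3)

/-- The family `𝒢` : `K₂`, `C₄` and the McCuaig braces
(prisms, Möbius ladders and biwheels). -/
def InMcCuaigFamily {V : Type*} (G : SimpleGraph V) : Prop :=
  Nonempty (G ≃g K2graph) ∨ Nonempty (G ≃g cycleGraph 4) ∨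
  (∃ m : ℕ, 3 ≤ m ∧ Nonempty (G ≃g prismGraph m)) ∨
  (∃ m : ℕ, 3 ≤ m ∧ Nonempty (G ≃g mobiusLadder m)) ∨
  (∃ m : ℕ, 3 ≤ m ∧ Nonempty (G ≃g biwheel m))

/-- The graph `Q_{2n}` (for `n ≥ 5`): color classes `{0, …, n-1}` on each side; the
hubs `0, 1` of each side are joined to all vertices `2, …, n-1` of the other side,
and the vertices `2, …, n-1` form a perfect matching between the two sides.
`Qgraph 5 = Q₁₀`, `Qgraph 6 = Q₁₂`, and `Qgraph n = Q_{2n}` of the family `𝒬` for `n ≥ 6`. -/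
def Qgraph (n : ℕ) : SimpleGraph (Fin n ⊕ Fin n) :=
  SimpleGraph.fromRel (fun x y =>
    match x, y with
    | Sum.inl i, Sum.inr j =>
        ((i : ℕ) < 2 ∧ 2 ≤ (j : ℕ)) ∨ ((j : ℕ) < 2 ∧ 2 ≤ (i : ℕ)) ∨
          ((i : ℕ) = (j : ℕ) ∧ 2 ≤ (i : ℕ))
    | _, _ => False)

/-- `Q₁₀⁺`: the graph `Q₁₀` plus an edge joining two noncubic vertices that lie in
distinct color classes (and in distinct `K_{3,3}`-pieces of the tight cut
decomposition of `Q₁₀`). -/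
def Q10plus : SimpleGraph (Fin 5 ⊕ Fin 5) :=
  Qgraph 5 ⊔ SimpleGraph.fromEdgeSet {s((Sum.inl 0 : Fin 5 ⊕ Fin 5), (Sum.inr 0 : Fin 5 ⊕ Fin 5))}

/-- The bipartite complement of `G` with respect to the color classes `A`, `B`. -/
def bipComplement {V : Type*} (G : SimpleGraph V) (A B : Set V) : SimpleGraph V :=
  SimpleGraph.fromRel (fun u v => u ∈ A ∧ v ∈ B ∧ ¬ G.Adj u v)

/-! ### Bi-splitting and expansion operations -/

/-- `G` is obtained from `H` by bi-splitting the noncubic vertex `b` into `b₁ a₀ b₂`,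
as witnessed by the projection `f : W → V` (which sends `b₁, a₀, b₂` to `b` and is a
bijection elsewhere). The edges of `H` at `b` are distributed between `b₁` and `b₂`,
each receiving at least two, and `a₀` is a new vertex adjacent precisely to `b₁, b₂`. -/
def IsBisplitMap {V W : Type*} (H : SimpleGraph V) (b : V) (G : SimpleGraph W)
    (b₁ a₀ b₂ : W) (f : W → V) : Prop :=
  4 ≤ mdeg H b ∧
  Function.Surjective f ∧ f b₁ = b ∧ f a₀ = b ∧ f b₂ = b ∧
  b₁ ≠ b₂ ∧ a₀ ≠ b₁ ∧ a₀ ≠ b₂ ∧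
  (∀ u v : W, f u = f v → u = v ∨
      (u ∈ ({b₁, a₀, b₂} : Set W) ∧ v ∈ ({b₁, a₀, b₂} : Set W))) ∧
  G.neighborSet a₀ = {b₁, b₂} ∧
  3 ≤ mdeg G b₁ ∧ 3 ≤ mdeg G b₂ ∧ ¬ G.Adj b₁ b₂ ∧
  (∀ x : W, x ≠ a₀ → ¬ (G.Adj b₁ x ∧ G.Adj b₂ x)) ∧
  (∀ x y : V, H.Adj x y ↔ (x ≠ y ∧ ∃ u v : W, G.Adj u v ∧ f u = x ∧ f v = y))

/-- Expansion of index zero: adding an edge joining two nonadjacent vertices in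
distinct color classes. -/
def ExpansionZero {W V : Type*} (G : SimpleGraph W) (H : SimpleGraph V) : Prop :=
  ∃ (A B : Set V) (a b : V), IsBipartition H A B ∧ a ∈ A ∧ b ∈ B ∧ ¬ H.Adj a b ∧ a ≠ b ∧
    Nonempty (G ≃g (H ⊔ SimpleGraph.fromEdgeSet {s(a, b)}))

/-- Expansion of index one: `G = H{a → a₁b₀a₂} + b₀w`, where `a, w` are in the same
color class of `H` and `a` is noncubic. -/
def ExpansionOne {W V : Type*} (G : SimpleGraph W) (H : SimpleGraph V) : Prop :=
  ∃ (A B : Set V) (a w : V), IsBipartition H A B ∧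
    ((a ∈ A ∧ w ∈ A) ∨ (a ∈ B ∧ w ∈ B)) ∧ a ≠ w ∧ 4 ≤ mdeg H a ∧
    ∃ (G₁ : SimpleGraph W) (a₁ b₀ a₂ : W) (f : W → V) (w' : W),
      IsBisplitMap H a G₁ a₁ b₀ a₂ f ∧ f w' = w ∧
      G = G₁ ⊔ SimpleGraph.fromEdgeSet {s(b₀, w')}

/-- Expansion of index two: `G = H{a → a₁b₀a₂}{b → b₁a₀b₂} + a₀b₀`, where `a, b` are
noncubic vertices of `H` in distinct color classes. -/
def ExpansionTwo {W V : Type*} (G : SimpleGraph W) (H : SimpleGraph V) : Prop :=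
  ∃ (A B : Set V) (a b : V), IsBipartition H A B ∧ a ∈ A ∧ b ∈ B ∧
    4 ≤ mdeg H a ∧ 4 ≤ mdeg H b ∧
    ∃ (sm : Set W) (G₁ : SimpleGraph sm) (a₁ b₀ a₂ : sm) (g : sm → V),
      IsBisplitMap H a G₁ a₁ b₀ a₂ g ∧
      ∃ (b' : sm) (G₂ : SimpleGraph W) (b₁ a₀ b₂ : W) (f : W → sm) (b₀' : W),
        g b' = b ∧ IsBisplitMap G₁ b' G₂ b₁ a₀ b₂ f ∧ f b₀' = b₀ ∧
        G = G₂ ⊔ SimpleGraph.fromEdgeSet {s(a₀, b₀')}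

/-- `G` is obtained from `H` by an expansion operation (of index zero, one or two). -/
def IsExpansionOf {W V : Type*} (G : SimpleGraph W) (H : SimpleGraph V) : Prop :=
  ExpansionZero G H ∨ ExpansionOne G H ∨ ExpansionTwo G H

/-! ### Narrow minimality-preserving pairs -/

/-- The properties of `F` (viewed in `G − e` via the retract map `fm`) required by the
Main Theorem: (i) if `index(e) = 1` then some outer vertex `v` has `F ⊆ ∂(v)`;
(ii) if `index(e) = 2` then some adjacent outer vertices `u, w` have `F ⊆ ∂({u,w})`;
(iii) for each `f ∈ F`, an end of `f` is cubic iff it is an outer vertex. -/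
def NarrowProps {V W : Type*} (G : SimpleGraph V) (fm : V → W) (e : Sym2 V)
    (F : Set (Sym2 W)) : Prop :=
  (thinIndex (G.deleteEdges {e}) = 1 →
      ∃ v : V, IsOuterVertex (G.deleteEdges {e}) v ∧
        ∀ g ∈ (G.deleteEdges {e}).edgeSet, Sym2.map fm g ∈ F → v ∈ g) ∧
  (thinIndex (G.deleteEdges {e}) = 2 →
      ∃ u w : V, IsOuterVertex (G.deleteEdges {e}) u ∧ IsOuterVertex (G.deleteEdges {e}) w ∧
        (G.deleteEdges {e}).Adj u w ∧
        ∀ g ∈ (G.deleteEdges {e}).edgeSet, Sym2.map fm g ∈ F →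
          ((u ∈ g ∧ w ∉ g) ∨ (w ∈ g ∧ u ∉ g))) ∧
  (∀ g ∈ (G.deleteEdges {e}).edgeSet, Sym2.map fm g ∈ F →
      ∀ x : V, x ∈ g → (mdeg G x = 3 ↔ IsOuterVertex (G.deleteEdges {e}) x))

/-- A narrow minimality-preserving pair, as in the Main Theorem. -/
def IsNarrowMPP {V W : Type*} (G : SimpleGraph V) (H : SimpleGraph W) (fm : V → W)
    (e : Sym2 V) (F : Set (Sym2 W)) : Prop :=
  IsMPPVia G H fm e F ∧
  (F = ∅ ∨ NarrowProps G fm e F) ∧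
  F.ncard ≤ thinIndex (G.deleteEdges {e}) + 1 ∧
  (thinIndex (G.deleteEdges {e}) = 1 ∧ F.ncard = 2 →
    IsStableExtensionOf G (H.deleteEdges F))


-- partner function of a perfect matching
noncomputable def pmP {V : Type*} {G : SimpleGraph V} (M : G.Subgraph)
    (hM : M.IsPerfectMatching) (v : V) : V :=
  (Subgraph.isPerfectMatching_iff.mp hM v).choose

lemma pmP_adj {V : Type*} {G : SimpleGraph V} {M : G.Subgraph}
    (hM : M.IsPerfectMatching) (v : V) : M.Adj v (pmP M hM v) :=
  (Subgraph.isPerfectMatching_iff.mp hM v).choose_spec.1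

lemma pmP_eq {V : Type*} {G : SimpleGraph V} {M : G.Subgraph}
    (hM : M.IsPerfectMatching) {v w : V} (h : M.Adj v w) : pmP M hM v = w :=
  ((Subgraph.isPerfectMatching_iff.mp hM v).choose_spec.2 w h).symm

lemma pmP_invol {V : Type*} {G : SimpleGraph V} {M : G.Subgraph}
    (hM : M.IsPerfectMatching) (v : V) : pmP M hM (pmP M hM v) = v :=
  pmP_eq hM (pmP_adj hM v).symm

lemma pm_edge_eq {V : Type*} {G : SimpleGraph V} {M : G.Subgraph}
    (hM : M.IsPerfectMatching) {e : Sym2 V} (he : e ∈ M.edgeSet) {z : V} (hz : z ∈ e) :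
    e = s(z, pmP M hM z) := by
  induction e with
  | _ a b =>
    rw [Subgraph.mem_edgeSet] at he
    rcases Sym2.mem_iff.mp hz with rfl | rfl
    · rw [pmP_eq hM he]
    · rw [pmP_eq hM he.symm, Sym2.eq_swap]

lemma crossing_count {V : Type*} [Fintype V] {G : SimpleGraph V} {A B : Set V}
    (hbip : IsBipartition G A B) {X : Set V}
    (hdir : ∀ u v : V, G.Adj u v → u ∈ X → v ∉ X → u ∈ A)
    {M : G.Subgraph} (hM : M.IsPerfectMatching) :
    (M.edgeSet ∩ cutEdges G X).ncard + (B ∩ X).ncard = (A ∩ X).ncard := by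
  classical
  obtain ⟨hun, hint, hadj⟩ := hbip
  have hAB : ∀ v : V, v ∈ A ∨ v ∈ B := by
    intro v
    have : v ∈ A ∪ B := hun ▸ Set.mem_univ v
    exact this
  have hnAB : ∀ v : V, v ∈ A → v ∈ B → False := by
    intro v hA hB
    have : v ∈ A ∩ B := ⟨hA, hB⟩
    rw [hint] at this
    exact this
  have classA : ∀ u v : V, G.Adj u v → u ∈ A → v ∈ B := by
    intro u v h hu
    rcases hadj u v h with ⟨_, hv⟩ | ⟨hu', _⟩
    · exact hv
    · exact absurd hu' (fun h' => hnAB u hu h')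
  have classB : ∀ u v : V, G.Adj u v → u ∈ B → v ∈ A := by
    intro u v h hu
    rcases hadj u v h with ⟨hu', _⟩ | ⟨_, hv⟩
    · exact absurd hu (hnAB u hu')
    · exact hv
  set p := pmP M hM with hp
  set D₁ : Set V := {a | (a ∈ A ∧ a ∈ X) ∧ p a ∈ X} with hD₁
  set D₂ : Set V := {a | (a ∈ A ∧ a ∈ X) ∧ p a ∉ X} with hD₂
  have hsplit : A ∩ X = D₁ ∪ D₂ := by
    ext a
    simp only [hD₁, hD₂, Set.mem_inter_iff, Set.mem_union, Set.mem_setOf_eq]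
    tauto
  have hdisj : Disjoint D₁ D₂ := by
    rw [Set.disjoint_left]
    rintro a ⟨_, h1⟩ ⟨_, h2⟩
    exact h2 h1
  have hbij1 : Set.BijOn p D₁ (B ∩ X) := by
    refine ⟨?_, ?_, ?_⟩
    · rintro a ⟨⟨haA, haX⟩, hpX⟩
      exact ⟨classA a (p a) (M.adj_sub (pmP_adj hM a)) haA, hpX⟩
    · rintro a _ a' _ hpa
      have := congrArg p hpa
      rwa [hp, pmP_invol, pmP_invol] at this
    · rintro b ⟨hbB, hbX⟩
      refine ⟨p b, ⟨⟨classB b (p b) (M.adj_sub (pmP_adj hM b)) hbB, ?_⟩, ?_⟩, ?_⟩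
      · by_contra hpbX
        exact hnAB b (hdir b (p b) (M.adj_sub (pmP_adj hM b)) hbX hpbX) hbB
      · rw [hp, pmP_invol]; exact hbX
      · rw [hp, pmP_invol]
  have hbij2 : Set.BijOn (fun a => s(a, p a)) D₂ (M.edgeSet ∩ cutEdges G X) := by
    refine ⟨?_, ?_, ?_⟩
    · rintro a ⟨⟨haA, haX⟩, hpX⟩
      refine ⟨Subgraph.mem_edgeSet.mpr (pmP_adj hM a),
        (SimpleGraph.mem_edgeSet G).mpr (M.adj_sub (pmP_adj hM a)), a, p a, rfl, haX, hpX⟩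
    · rintro a ⟨⟨haA, haX⟩, hpX⟩ a' ⟨⟨haA', haX'⟩, hpX'⟩ hs
      simp only [Sym2.eq, Sym2.rel_iff', Prod.mk.injEq, Prod.swap_prod_mk] at hs
      rcases hs with ⟨h1, _⟩ | ⟨h1, h2⟩
      · exact h1
      · exact absurd (h1 ▸ haX) hpX'
    · rintro e ⟨heM, heG, u, v, rfl, huX, hvX⟩
      have hMuv : M.Adj u v := Subgraph.mem_edgeSet.mp heM
      have huA : u ∈ A := hdir u v (M.adj_sub hMuv) huX hvX
      have hpv : p u = v := pmP_eq hM hMuv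
      exact ⟨u, ⟨⟨huA, huX⟩, hpv ▸ hvX⟩, by simp only []; rw [hpv]⟩
  have h1 : (B ∩ X).ncard = D₁.ncard := by
    rw [← hbij1.image_eq]
    exact Set.ncard_image_of_injOn hbij1.injOn
  have h2 : (M.edgeSet ∩ cutEdges G X).ncard = D₂.ncard := by
    rw [← hbij2.image_eq]
    exact Set.ncard_image_of_injOn hbij2.injOn
  rw [h1, h2, hsplit, Set.ncard_union_eq hdisj (Set.toFinite _) (Set.toFinite _)]
  ring


lemma key_cut {V : Type*} [Fintype V] {G : SimpleGraph V} {A B : Set V}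
    (hbip : IsBipartition G A B) (hmc : IsMatchingCovered G)
    (K L S : Set V)
    (hpart : ∀ v : V, v ∈ K ∨ v ∈ L ∨ v ∈ S)
    (hKL : ∀ u ∈ K, ∀ v ∈ L, ¬ G.Adj u v)
    (hKS : ∀ v ∈ K, v ∉ S) (hLS : ∀ v ∈ L, v ∉ S) (hLK : ∀ v ∈ L, v ∉ K)
    (hScard : S.ncard ≤ 2)
    {l₀ : V} (hl₀ : l₀ ∈ L)
    {s₁ w₁ : V} (hs₁S : s₁ ∈ S) (hs₁A : s₁ ∈ A) (hw₁ : w₁ ∈ K) (hadj₁ : G.Adj s₁ w₁)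
    (hbig : (S \ A).Nonempty ∨ 1 < L.ncard) :
    ∃ X : Set V, IsTightCut G X ∧ ¬ IsTrivialShore X := by
  classical
  obtain ⟨hun, hint, hadjbip⟩ := hbip
  have hnAB : ∀ v : V, v ∈ A → v ∉ A → False := fun v h h' => h' h
  set X : Set V := K ∪ (S ∩ A) with hX
  -- basic membership facts
  have hw₁X : w₁ ∈ X := Or.inl hw₁
  have hs₁X : s₁ ∈ X := Or.inr ⟨hs₁S, hs₁A⟩
  have hl₀X : l₀ ∉ X := by
    rintro (h | ⟨h, _⟩)
    · exact hLK l₀ hl₀ h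
    · exact hLS l₀ hl₀ h
  -- direction condition
  have hdir : ∀ u v : V, G.Adj u v → u ∈ X → v ∉ X → u ∈ A := by
    rintro u v hadj (huK | ⟨_, huA⟩) hv
    · have hvS : v ∈ S := by
        rcases hpart v with hvK | hvL | hvS
        · exact absurd (Or.inl hvK) hv
        · exact absurd hadj (hKL u huK v hvL)
        · exact hvS
      have hvnA : v ∉ A := fun hvA => hv (Or.inr ⟨hvS, hvA⟩)
      rcases hadjbip u v hadj with ⟨huA, _⟩ | ⟨_, hvA⟩
      · exact huA
      · exact absurd hvA hvnA
    · exact huA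
  -- every crossing edge meets S
  have hmeetS : ∀ e ∈ cutEdges G X, ∃ z ∈ S, z ∈ e := by
    rintro e ⟨heG, u, v, rfl, huX, hvX⟩
    rcases huX with huK | ⟨huS, _⟩
    · rcases hpart v with hvK | hvL | hvS
      · exact absurd (Or.inl hvK) hvX
      · exact absurd ((SimpleGraph.mem_edgeSet G).mp heG) (hKL u huK v hvL)
      · exact ⟨v, hvS, Sym2.mem_mk_right u v⟩
    · exact ⟨u, huS, Sym2.mem_mk_left u v⟩
  -- matching M₁ containing s₁w₁
  obtain ⟨M₁, hM₁, he₁⟩ := hmc.2.2 s(s₁, w₁) ((SimpleGraph.mem_edgeSet G).mpr hadj₁)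
  -- crossing number of M₁ is at most 1
  have hSdiff : ∀ a ∈ S \ {s₁}, ∀ b ∈ S \ {s₁}, a = b := by
    have hcard : (S \ {s₁}).ncard ≤ 1 := by
      have := Set.ncard_diff_singleton_add_one hs₁S (Set.toFinite S)
      omega
    exact (Set.ncard_le_one (Set.toFinite _)).mp hcard
  have hcr₁ : (M₁.edgeSet ∩ cutEdges G X).ncard ≤ 1 := by
    apply (Set.ncard_le_one (Set.toFinite _)).mpr
    rintro e ⟨heM, heC⟩ e' ⟨heM', heC'⟩
    obtain ⟨z, hzS, hze⟩ := hmeetS e heC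
    obtain ⟨z', hzS', hze'⟩ := hmeetS e' heC'
    have hnots₁ : ∀ f ∈ M₁.edgeSet, f ∈ cutEdges G X → s₁ ∉ f := by
      rintro f hfM hfC hs₁f
      have hf : f = s(s₁, pmP M₁ hM₁ s₁) := pm_edge_eq hM₁ hfM hs₁f
      have : pmP M₁ hM₁ s₁ = w₁ := pmP_eq hM₁ (Subgraph.mem_edgeSet.mp he₁)
      rw [this] at hf
      obtain ⟨_, u, v, huv, huX, hvX⟩ := hfC
      rw [hf] at huv
      have hvmem : v ∈ s(s₁, w₁) := huv ▸ Sym2.mem_mk_right u v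
      rcases Sym2.mem_iff.mp hvmem with rfl | rfl
      · exact hvX hs₁X
      · exact hvX hw₁X
    have hz1 : z ≠ s₁ := fun h => hnots₁ e heM heC (h ▸ hze)
    have hz1' : z' ≠ s₁ := fun h => hnots₁ e' heM' heC' (h ▸ hze')
    have hzz : z = z' := hSdiff z ⟨hzS, hz1⟩ z' ⟨hzS', hz1'⟩
    rw [pm_edge_eq hM₁ heM hze, pm_edge_eq hM₁ heM' hze', hzz]
  -- a perfect matching with crossing number ≥ 1
  obtain ⟨wk⟩ := hmc.1.preconnected w₁ l₀
  obtain ⟨d, _, hdX, hdX'⟩ := wk.exists_boundary_dart X hw₁X hl₀X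
  have hd : s(d.fst, d.snd) ∈ cutEdges G X :=
    ⟨(SimpleGraph.mem_edgeSet G).mpr d.adj, d.fst, d.snd, rfl, hdX, hdX'⟩
  obtain ⟨M₄, hM₄, he₄⟩ := hmc.2.2 s(d.fst, d.snd) ((SimpleGraph.mem_edgeSet G).mpr d.adj)
  have hcr₄ : 1 ≤ (M₄.edgeSet ∩ cutEdges G X).ncard := by
    have hne : (M₄.edgeSet ∩ cutEdges G X).Nonempty := ⟨s(d.fst, d.snd), he₄, hd⟩
    have := (Set.ncard_pos (Set.toFinite _)).mpr hne
    omega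
  -- tightness
  have htight : IsTightCut G X := by
    intro M hM
    have c := crossing_count ⟨hun, hint, hadjbip⟩ hdir hM
    have c₁ := crossing_count ⟨hun, hint, hadjbip⟩ hdir hM₁
    have c₄ := crossing_count ⟨hun, hint, hadjbip⟩ hdir hM₄
    omega
  -- nontriviality
  refine ⟨X, htight, ?_⟩
  rintro (⟨v, hv⟩ | ⟨v, hv⟩)
  · have h1 : s₁ = v := by rw [hv] at hs₁X; exact hs₁X
    have h2 : w₁ = v := by rw [hv] at hw₁X; exact hw₁X
    exact hKS w₁ hw₁ ((h2.trans h1.symm) ▸ hs₁S)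
  · -- Xᶜ has two distinct elements
    obtain ⟨a, ha, b, hb, hab⟩ :
        ∃ a, a ∉ X ∧ ∃ b, b ∉ X ∧ a ≠ b := by
      rcases hbig with ⟨t, htS, htA⟩ | hL2
      · refine ⟨t, ?_, l₀, hl₀X, ?_⟩
        · rintro (h | ⟨_, h⟩)
          · exact hKS t h htS
          · exact htA h
        · intro h; exact hLS l₀ hl₀ (h ▸ htS)
      · obtain ⟨a, haL, b, hbL, hab⟩ := (Set.one_lt_ncard (Set.toFinite L)).mp hL2
        have haX : a ∉ X := by
          rintro (h | ⟨h, _⟩); exacts [hLK a haL h, hLS a haL h]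
        have hbX : b ∉ X := by
          rintro (h | ⟨h, _⟩); exacts [hLK b hbL h, hLS b hbL h]
        exact ⟨a, haX, b, hbX, hab⟩
    have h1 : a = v := by
      have : a ∈ Xᶜ := ha
      rw [hv] at this; exact this
    have h2 : b = v := by
      have : b ∈ Xᶜ := hb
      rw [hv] at this; exact this
    exact hab (h1.trans h2.symm)

lemma IsBipartition.symm {V : Type*} {G : SimpleGraph V} {A B : Set V}
    (h : IsBipartition G A B) : IsBipartition G B A :=
  ⟨by rw [Set.union_comm]; exact h.1, by rw [Set.inter_comm]; exact h.2.1,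
    fun u v huv => (h.2.2 u v huv).symm⟩


/-- Every brace of order six or more is 3-connected. -/
theorem statement3 {V : Type*} [Fintype V] (G : SimpleGraph V)
    (hG : IsBrace G) (horder : 6 ≤ Fintype.card V) :
    IsThreeConnected G := by
  classical
  obtain ⟨⟨A, B, hbip⟩, hmc, hnocut⟩ := hG
  refine ⟨by omega, ?_⟩
  intro S hS
  by_contra hnc
  have hcompl : S.ncard + Sᶜ.ncard = Fintype.card V := by
    have := Set.ncard_add_ncard_compl S (Set.toFinite S) (Set.toFinite _)
    rwa [Nat.card_eq_fintype_card] at this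
  have hScne : (Sᶜ : Set V).Nonempty := by
    rw [← Set.ncard_pos (Set.toFinite _)]; omega
  haveI hne : Nonempty ↥(Sᶜ : Set V) := hScne.to_subtype
  have hpre : ¬ (G.induce Sᶜ).Preconnected := by
    intro h
    exact hnc ((SimpleGraph.connected_iff _).mpr ⟨h, hne⟩)
  simp only [SimpleGraph.Preconnected, not_forall] at hpre
  obtain ⟨u₀, v₀, hur⟩ := hpre
  set K : Set V := {v : V | ∃ h : v ∈ (Sᶜ : Set V), (G.induce Sᶜ).Reachable u₀ ⟨v, h⟩}
    with hKdef
  set L : Set V := Sᶜ \ K with hLdef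
  have hKsub : K ⊆ (Sᶜ : Set V) := by
    rintro v ⟨h, -⟩; exact h
  have hu₀K : (u₀ : V) ∈ K := ⟨u₀.2, SimpleGraph.Reachable.refl u₀⟩
  have hv₀L : (v₀ : V) ∈ L := by
    refine ⟨v₀.2, ?_⟩
    rintro ⟨h, hr⟩
    exact hur hr
  have hKL : ∀ u ∈ K, ∀ v ∈ L, ¬ G.Adj u v := by
    rintro u ⟨hu, hru⟩ v ⟨hv, hvK⟩ hadj
    refine hvK ⟨hv, ?_⟩
    have hadj' : (G.induce Sᶜ).Adj ⟨u, hu⟩ ⟨v, hv⟩ := by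
      simp only [SimpleGraph.comap_adj, Function.Embedding.coe_subtype]
      exact hadj
    exact hru.trans hadj'.reachable
  have hpart : ∀ v : V, v ∈ K ∨ v ∈ L ∨ v ∈ S := by
    intro v
    by_cases hvS : v ∈ S
    · exact Or.inr (Or.inr hvS)
    · by_cases hvK : v ∈ K
      · exact Or.inl hvK
      · exact Or.inr (Or.inl ⟨hvS, hvK⟩)
  have hKS : ∀ v ∈ K, v ∉ S := by
    rintro v ⟨h, -⟩; exact h
  have hLS : ∀ v ∈ L, v ∉ S := fun v hv => hv.1
  have hLK : ∀ v ∈ L, v ∉ K := fun v hv => hv.2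
  -- existence of S-edges towards K and L
  have hexK : ∃ s ∈ S, ∃ w ∈ K, G.Adj s w := by
    obtain ⟨wk⟩ := hmc.1.preconnected (u₀ : V) (v₀ : V)
    obtain ⟨d, _, hd1, hd2⟩ := wk.exists_boundary_dart K hu₀K (hLK _ hv₀L)
    rcases hpart d.snd with h | h | h
    · exact absurd h hd2
    · exact absurd d.adj (hKL d.fst hd1 d.snd h)
    · exact ⟨d.snd, h, d.fst, hd1, d.adj.symm⟩
  have hexL : ∃ s ∈ S, ∃ w ∈ L, G.Adj s w := by
    obtain ⟨wk⟩ := hmc.1.preconnected (v₀ : V) (u₀ : V)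
    have hu₀L : (u₀ : V) ∉ L := fun h => hLK _ h hu₀K
    obtain ⟨d, _, hd1, hd2⟩ := wk.exists_boundary_dart L hv₀L hu₀L
    rcases hpart d.snd with h | h | h
    · exact absurd d.adj.symm (hKL d.snd h d.fst hd1)
    · exact absurd h hd2
    · exact ⟨d.snd, h, d.fst, hd1, d.adj.symm⟩
  obtain ⟨sK, hsKS, wK, hwK, hadjK⟩ := hexK
  obtain ⟨sL, hsLS, wL, hwL, hadjL⟩ := hexL
  -- cardinality: K and L together have at least 4 vertices
  have hKLun : K ∪ L = (Sᶜ : Set V) := by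
    apply Set.Subset.antisymm
    · rintro v (hv | hv)
      · exact hKsub hv
      · exact hv.1
    · intro v hv
      by_cases hvK : v ∈ K
      · exact Or.inl hvK
      · exact Or.inr ⟨hv, hvK⟩
  have hdisjKL : Disjoint K L := Set.disjoint_left.mpr (fun a ha ha' => hLK a ha' ha)
  have hcard4 : 4 ≤ K.ncard + L.ncard := by
    have := Set.ncard_union_eq hdisjKL (Set.toFinite K) (Set.toFinite L)
    rw [hKLun] at this
    omega
  -- swapped versions of the structural hypotheses
  have hpart' : ∀ v : V, v ∈ L ∨ v ∈ K ∨ v ∈ S := by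
    intro v; rcases hpart v with h | h | h <;> tauto
  have hKL' : ∀ u ∈ L, ∀ v ∈ K, ¬ G.Adj u v :=
    fun u hu v hv h => hKL v hv u hu h.symm
  have hKL'' : ∀ v ∈ K, v ∉ L := fun v hv h => hLK v h hv
  have hAorB : ∀ v : V, v ∈ A ∨ v ∈ B := by
    intro v
    have : v ∈ A ∪ B := hbip.1 ▸ Set.mem_univ v
    exact this
  by_cases hsKA : sK ∈ A
  · by_cases h2 : (S \ A).Nonempty
    · obtain ⟨X, ht, hnt⟩ := key_cut hbip hmc K L S hpart hKL hKS hLS hLK hS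
        hv₀L hsKS hsKA hwK hadjK (Or.inl h2)
      exact hnt (hnocut X ht)
    · by_cases h3 : 1 < L.ncard
      · obtain ⟨X, ht, hnt⟩ := key_cut hbip hmc K L S hpart hKL hKS hLS hLK hS
          hv₀L hsKS hsKA hwK hadjK (Or.inr h3)
        exact hnt (hnocut X ht)
      · have hsLA : sL ∈ A := by
          by_contra h; exact h2 ⟨sL, hsLS, h⟩
        have h4 : 1 < K.ncard := by omega
        obtain ⟨X, ht, hnt⟩ := key_cut hbip hmc L K S hpart' hKL' hLS hKS hKL'' hS
          hu₀K hsLS hsLA hwL hadjL (Or.inr h4)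
        exact hnt (hnocut X ht)
  · have hsKB : sK ∈ B := (hAorB sK).resolve_left hsKA
    by_cases h2 : (S \ B).Nonempty
    · obtain ⟨X, ht, hnt⟩ := key_cut hbip.symm hmc K L S hpart hKL hKS hLS hLK hS
        hv₀L hsKS hsKB hwK hadjK (Or.inl h2)
      exact hnt (hnocut X ht)
    · by_cases h3 : 1 < L.ncard
      · obtain ⟨X, ht, hnt⟩ := key_cut hbip.symm hmc K L S hpart hKL hKS hLS hLK hS
          hv₀L hsKS hsKB hwK hadjK (Or.inr h3)
        exact hnt (hnocut X ht)
      · have hsLB : sL ∈ B := by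
          by_contra h; exact h2 ⟨sL, hsLS, h⟩
        have h4 : 1 < K.ncard := by omega
        obtain ⟨X, ht, hnt⟩ := key_cut hbip.symm hmc L K S hpart' hKL' hLS hKS hKL'' hS
          hu₀K hsLS hsLB hwL hadjL (Or.inr h4)
        exact hnt (hnocut X ht)

end MinimalBraces
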